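/- Let A be a Hopf algebra over ℂ with antipode S. For a linear functional f on A define the ℂ-linear operator 𝔅(f) on A⊗A⊗A⊗A by 𝔅(f)(x⊗y⊗z⊗v) = Σ f(x₍₂₎·S(y₍₁₎)·S(z₍₁₎)·v₍₂₎) · x₍₁₎⊗y₍₂₎⊗z₍₂₎⊗v₍₁₎. Then 𝔅(ε) = id and 𝔅(f∗f') = 𝔅(f)∘𝔅(f') for all linear functionals f, f', where ∗ is the convolution product; i.e. 𝔅 is an algebra-homomorphic representation of the convolution algebra A* on A^{⊗4}. (These are the local plaquette operators B^f of the Drinfeld double action on the Kitaev model.) -/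

import Mathlib

/-!
STATEMENT 15: Let `A` be a Hopf algebra over `ℂ` with antipode `S`.  For a linear functional
`f` on `A` define the `ℂ`-linear operator `𝔅 f` on `A ⊗ A ⊗ A ⊗ A` by
`𝔅 f (x ⊗ y ⊗ z ⊗ v) = Σ f (x₍₂₎ * S y₍₁₎ * S z₍₁₎ * v₍₂₎) • x₍₁₎ ⊗ y₍₂₎ ⊗ z₍₂₎ ⊗ v₍₁₎`.
Then `𝔅 ε = id` and `𝔅 (f ∗ f') = 𝔅 f ∘ 𝔅 f'` (with `∗` the convolution product); i.e.
`𝔅` is an algebra-homomorphic representation of `A*` on `A^{⊗4}` (the local plaquette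
operators of the Kitaev model).

Encoding: `comulEach` comultiplies each tensor factor, `preSwap` flips the first and the
fourth of the resulting pairs, `unzip` (built from `tensorTensorTensorComm`) regroups
`(a₁ ⊗ b₁) ⊗ (a₂ ⊗ b₂) ⊗ (a₃ ⊗ b₃) ⊗ (a₄ ⊗ b₄)` into
`(a₁ ⊗ a₂ ⊗ a₃ ⊗ a₄) ⊗ (b₁ ⊗ b₂ ⊗ b₃ ⊗ b₄)`, and the functional
`scalarPart f (a₁ ⊗ a₂ ⊗ a₃ ⊗ a₄) = f (a₁ * S a₂ * S a₃ * a₄)` is applied to the first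
group.  Altogether `plaquetteRep f` is exactly the operator `𝔅 f` above: the scalar slots
receive `(x₍₂₎, y₍₁₎, z₍₁₎, v₍₂₎)` and the output slots `(x₍₁₎, y₍₂₎, z₍₂₎, v₍₁₎)`.
-/

open TensorProduct

noncomputable section

/-- The convolution product on the dual:
`(f ∗ g) a = Σ_{(a)} f a₍₁₎ * g a₍₂₎`; the counit is its unit. -/
def conv {A : Type*} [Ring A] [HopfAlgebra ℂ A]
    (f g : Module.Dual ℂ A) : Module.Dual ℂ A :=
  LinearMap.mul' ℂ ℂ ∘ₗ TensorProduct.map f g ∘ₗ Coalgebra.comul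

variable (A : Type*) [Ring A] [HopfAlgebra ℂ A]

/-- Comultiply every factor of `A^{⊗4}`. -/
def comulEach : (A ⊗[ℂ] (A ⊗[ℂ] (A ⊗[ℂ] A))) →ₗ[ℂ]
    ((A ⊗[ℂ] A) ⊗[ℂ] ((A ⊗[ℂ] A) ⊗[ℂ] ((A ⊗[ℂ] A) ⊗[ℂ] (A ⊗[ℂ] A)))) :=
  TensorProduct.map Coalgebra.comul
    (TensorProduct.map Coalgebra.comul
      (TensorProduct.map Coalgebra.comul Coalgebra.comul))

/-- Flip the first and fourth pairs:
`(x₁ ⊗ x₂) ⊗ (y₁ ⊗ y₂) ⊗ (z₁ ⊗ z₂) ⊗ (v₁ ⊗ v₂) ↦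
 (x₂ ⊗ x₁) ⊗ (y₁ ⊗ y₂) ⊗ (z₁ ⊗ z₂) ⊗ (v₂ ⊗ v₁)`. -/
def preSwap : ((A ⊗[ℂ] A) ⊗[ℂ] ((A ⊗[ℂ] A) ⊗[ℂ] ((A ⊗[ℂ] A) ⊗[ℂ] (A ⊗[ℂ] A)))) →ₗ[ℂ]
    ((A ⊗[ℂ] A) ⊗[ℂ] ((A ⊗[ℂ] A) ⊗[ℂ] ((A ⊗[ℂ] A) ⊗[ℂ] (A ⊗[ℂ] A)))) :=
  TensorProduct.map (TensorProduct.comm ℂ A A).toLinearMap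
    (TensorProduct.map LinearMap.id
      (TensorProduct.map LinearMap.id (TensorProduct.comm ℂ A A).toLinearMap))

/-- Regroup `(a₁ ⊗ b₁) ⊗ (a₂ ⊗ b₂) ⊗ (a₃ ⊗ b₃) ⊗ (a₄ ⊗ b₄)` into
`(a₁ ⊗ a₂ ⊗ a₃ ⊗ a₄) ⊗ (b₁ ⊗ b₂ ⊗ b₃ ⊗ b₄)`. -/
def unzip : ((A ⊗[ℂ] A) ⊗[ℂ] ((A ⊗[ℂ] A) ⊗[ℂ] ((A ⊗[ℂ] A) ⊗[ℂ] (A ⊗[ℂ] A)))) ≃ₗ[ℂ]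
    ((A ⊗[ℂ] (A ⊗[ℂ] (A ⊗[ℂ] A))) ⊗[ℂ] (A ⊗[ℂ] (A ⊗[ℂ] (A ⊗[ℂ] A)))) :=
  (TensorProduct.congr (LinearEquiv.refl ℂ (A ⊗[ℂ] A))
      ((TensorProduct.congr (LinearEquiv.refl ℂ (A ⊗[ℂ] A))
          (TensorProduct.tensorTensorTensorComm ℂ A A A A)).trans
        (TensorProduct.tensorTensorTensorComm ℂ A A (A ⊗[ℂ] A) (A ⊗[ℂ] A)))).trans
    (TensorProduct.tensorTensorTensorComm ℂ A A (A ⊗[ℂ] (A ⊗[ℂ] A)) (A ⊗[ℂ] (A ⊗[ℂ] A)))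

/-- Multiply four factors: `a ⊗ b ⊗ c ⊗ d ↦ a * b * c * d`. -/
def mulFour : (A ⊗[ℂ] (A ⊗[ℂ] (A ⊗[ℂ] A))) →ₗ[ℂ] A :=
  LinearMap.mul' ℂ A ∘ₗ LinearMap.lTensor A (LinearMap.mul' ℂ A) ∘ₗ
    LinearMap.lTensor A (LinearMap.lTensor A (LinearMap.mul' ℂ A))

/-- The functional `a₁ ⊗ a₂ ⊗ a₃ ⊗ a₄ ↦ f (a₁ * S a₂ * S a₃ * a₄)`. -/
def scalarPart (f : Module.Dual ℂ A) : (A ⊗[ℂ] (A ⊗[ℂ] (A ⊗[ℂ] A))) →ₗ[ℂ] ℂ :=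
  f ∘ₗ mulFour A ∘ₗ
    TensorProduct.map LinearMap.id
      (TensorProduct.map (HopfAlgebra.antipode (R := ℂ) (A := A))
        (TensorProduct.map (HopfAlgebra.antipode (R := ℂ) (A := A)) LinearMap.id))

/-- The Kitaev plaquette operator
`𝔅 f (x ⊗ y ⊗ z ⊗ v) = Σ f (x₍₂₎ * S y₍₁₎ * S z₍₁₎ * v₍₂₎) • x₍₁₎ ⊗ y₍₂₎ ⊗ z₍₂₎ ⊗ v₍₁₎`. -/
def plaquetteRep (f : Module.Dual ℂ A) :
    Module.End ℂ (A ⊗[ℂ] (A ⊗[ℂ] (A ⊗[ℂ] A))) :=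
  (TensorProduct.lid ℂ (A ⊗[ℂ] (A ⊗[ℂ] (A ⊗[ℂ] A)))).toLinearMap ∘ₗ
    LinearMap.rTensor (A ⊗[ℂ] (A ⊗[ℂ] (A ⊗[ℂ] A))) (scalarPart A f) ∘ₗ
      (unzip A).toLinearMap ∘ₗ preSwap A ∘ₗ comulEach A


/-!
`plaquetteRep f` is `(id ⊗ f) ∘ ρ` for a right `A`-coaction `ρ` on `A^{⊗4}`: the tensor product
(with coefficients multiplied in `A`) of the regular coaction `x ↦ x₍₁₎ ⊗ x₍₂₎` on the outer
factors and of `y ↦ y₍₂₎ ⊗ S y₍₁₎` on the inner ones.  For any right coaction, counitality gives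
`(id ⊗ ε) ∘ ρ = id` and coassociativity turns `(id ⊗ (f ∗ f')) ∘ ρ` into the composite of the
two actions.  The coaction `y ↦ y₍₂₎ ⊗ S y₍₁₎` is coassociative because the antipode is
anti-comultiplicative, `Δ ∘ S = (S ⊗ S) ∘ τ ∘ Δ`: both sides are convolution inverses of `Δ`.
-/

open Coalgebra HopfAlgebra WithConv

section TensorTensorMul

variable (R A M N : Type*) [CommSemiring R] [Semiring A] [Algebra R A]
  [AddCommMonoid M] [Module R M] [AddCommMonoid N] [Module R N]

def tensorTensorMul : (M ⊗[R] A) ⊗[R] (N ⊗[R] A) →ₗ[R] (M ⊗[R] N) ⊗[R] A :=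
  (LinearMap.mul' R A).lTensor (M ⊗[R] N) ∘ₗ (tensorTensorTensorComm R M A N A).toLinearMap

variable {R A M N}

@[simp]
lemma tensorTensorMul_tmul (m : M) (a : A) (n : N) (b : A) :
    tensorTensorMul R A M N ((m ⊗ₜ a) ⊗ₜ (n ⊗ₜ b)) = (m ⊗ₜ n) ⊗ₜ (a * b) := rfl

lemma rTensor_map_comp_tensorTensorMul {M' N' : Type*} [AddCommMonoid M'] [Module R M']
    [AddCommMonoid N'] [Module R N'] (f : M →ₗ[R] M') (g : N →ₗ[R] N') :
    (map f g).rTensor A ∘ₗ tensorTensorMul R A M N =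
      tensorTensorMul R A M' N' ∘ₗ map (f.rTensor A) (g.rTensor A) := by
  ext; simp

lemma lTensor_comp_tensorTensorMul {B : Type*} [Semiring B] [Algebra R B] (φ : A →ₐ[R] B) :
    φ.toLinearMap.lTensor (M ⊗[R] N) ∘ₗ tensorTensorMul R A M N =
      tensorTensorMul R B M N ∘ₗ map (φ.toLinearMap.lTensor M) (φ.toLinearMap.lTensor N) := by
  ext; simp

lemma assoc_comp_rTensor_tensorTensorMul_comp_tensorTensorMul :
    (TensorProduct.assoc R (M ⊗[R] N) A A).toLinearMap ∘ₗ (tensorTensorMul R A M N).rTensor A ∘ₗ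
        tensorTensorMul R A (M ⊗[R] A) (N ⊗[R] A) =
      tensorTensorMul R (A ⊗[R] A) M N ∘ₗ
        map (TensorProduct.assoc R M A A).toLinearMap
          (TensorProduct.assoc R N A A).toLinearMap := by
  ext; simp

end TensorTensorMul

section RightCoaction

variable {R A M N : Type*} [CommSemiring R] [AddCommMonoid A] [Module R A]
  [AddCommMonoid M] [Module R M] [AddCommMonoid N] [Module R N]

def dualAct (ρ : M →ₗ[R] M ⊗[R] A) (f : A →ₗ[R] R) : Module.End R M :=
  (TensorProduct.rid R M).toLinearMap ∘ₗ f.lTensor M ∘ₗ ρ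

lemma rid_comp_lTensor_comp_rTensor (f : A →ₗ[R] R) (L : M →ₗ[R] N) :
    (TensorProduct.rid R N).toLinearMap ∘ₗ f.lTensor N ∘ₗ L.rTensor A =
      L ∘ₗ (TensorProduct.rid R M).toLinearMap ∘ₗ f.lTensor M := by
  ext; simp

variable [Coalgebra R A]

structure IsRightCoaction (ρ : M →ₗ[R] M ⊗[R] A) : Prop where
  lTensor_counit_comp : counit.lTensor M ∘ₗ ρ = (TensorProduct.mk R M R).flip 1
  coassoc : (TensorProduct.assoc R M A A).toLinearMap ∘ₗ ρ.rTensor A ∘ₗ ρ = comul.lTensor M ∘ₗ ρ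

variable {ρ : M →ₗ[R] M ⊗[R] A}

lemma IsRightCoaction.dualAct_counit (h : IsRightCoaction ρ) : dualAct ρ counit = LinearMap.id := by
  ext m
  simp [dualAct, h.lTensor_counit_comp]

lemma IsRightCoaction.dualAct_convMul (h : IsRightCoaction ρ) (f g : A →ₗ[R] R) :
    dualAct ρ (toConv f * toConv g).ofConv = dualAct ρ f ∘ₗ dualAct ρ g := by
  have hfg : (TensorProduct.rid R M).toLinearMap ∘ₗ (LinearMap.mul' R R ∘ₗ map f g).lTensor M ∘ₗ
        (TensorProduct.assoc R M A A).toLinearMap =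
      (TensorProduct.rid R M).toLinearMap ∘ₗ f.lTensor M ∘ₗ
        (TensorProduct.rid R (M ⊗[R] A)).toLinearMap ∘ₗ g.lTensor (M ⊗[R] A) := by
    ext m a b
    simp only [LinearMap.comp_apply, TensorProduct.AlgebraTensorModule.curry_apply,
      TensorProduct.curry_apply, LinearMap.coe_restrictScalars, LinearEquiv.coe_coe,
      TensorProduct.assoc_tmul, LinearMap.lTensor_tmul, map_tmul, LinearMap.mul'_apply,
      TensorProduct.rid_tmul, map_smul]
    rw [mul_comm, mul_smul]
  calc dualAct ρ (toConv f * toConv g).ofConv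
      = ((TensorProduct.rid R M).toLinearMap ∘ₗ (LinearMap.mul' R R ∘ₗ map f g).lTensor M ∘ₗ
          (TensorProduct.assoc R M A A).toLinearMap) ∘ₗ ρ.rTensor A ∘ₗ ρ := by
        simp only [dualAct, h.coassoc, LinearMap.convMul_def, ofConv_toConv,
          LinearMap.lTensor_comp, LinearMap.comp_assoc]
    _ = (TensorProduct.rid R M).toLinearMap ∘ₗ f.lTensor M ∘ₗ
          ((TensorProduct.rid R (M ⊗[R] A)).toLinearMap ∘ₗ g.lTensor (M ⊗[R] A) ∘ₗ
            ρ.rTensor A) ∘ₗ ρ := by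
        rw [hfg]; rfl
    _ = dualAct ρ f ∘ₗ dualAct ρ g := by
        rw [rid_comp_lTensor_comp_rTensor]; rfl

lemma isRightCoaction_comul : IsRightCoaction (comul : A →ₗ[R] A ⊗[R] A) :=
  ⟨lTensor_counit_comp_comul, coassoc⟩

end RightCoaction

section TensorCoaction

variable {R A M N : Type*} [CommSemiring R] [Semiring A] [Bialgebra R A]
  [AddCommMonoid M] [Module R M] [AddCommMonoid N] [Module R N]

def tensorCoaction (ρ : M →ₗ[R] M ⊗[R] A) (σ : N →ₗ[R] N ⊗[R] A) :
    M ⊗[R] N →ₗ[R] (M ⊗[R] N) ⊗[R] A :=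
  tensorTensorMul R A M N ∘ₗ map ρ σ

variable {ρ : M →ₗ[R] M ⊗[R] A} {σ : N →ₗ[R] N ⊗[R] A}

lemma IsRightCoaction.tensor (hρ : IsRightCoaction ρ) (hσ : IsRightCoaction σ) :
    IsRightCoaction (tensorCoaction ρ σ) where
  lTensor_counit_comp := calc
    counit.lTensor (M ⊗[R] N) ∘ₗ tensorTensorMul R A M N ∘ₗ map ρ σ
        = tensorTensorMul R R M N ∘ₗ map (counit.lTensor M ∘ₗ ρ) (counit.lTensor N ∘ₗ σ) := by
      rw [← LinearMap.comp_assoc, ← Bialgebra.toLinearMap_counitAlgHom,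
        lTensor_comp_tensorTensorMul, LinearMap.comp_assoc, ← map_comp]
    _ = (TensorProduct.mk R (M ⊗[R] N) R).flip 1 := by
      rw [hρ.lTensor_counit_comp, hσ.lTensor_counit_comp]
      ext; simp
  coassoc := calc
    (TensorProduct.assoc R (M ⊗[R] N) A A).toLinearMap ∘ₗ
          (tensorTensorMul R A M N ∘ₗ map ρ σ).rTensor A ∘ₗ tensorTensorMul R A M N ∘ₗ map ρ σ
        = ((TensorProduct.assoc R (M ⊗[R] N) A A).toLinearMap ∘ₗ
            (tensorTensorMul R A M N).rTensor A ∘ₗ tensorTensorMul R A (M ⊗[R] A) (N ⊗[R] A)) ∘ₗ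
            map (ρ.rTensor A) (σ.rTensor A) ∘ₗ map ρ σ := by
      simp only [LinearMap.rTensor_comp, LinearMap.comp_assoc]
      rw [← LinearMap.comp_assoc (map ρ σ) (tensorTensorMul R A M N) ((map ρ σ).rTensor A),
        rTensor_map_comp_tensorTensorMul]
      rfl
    _ = tensorTensorMul R (A ⊗[R] A) M N ∘ₗ
          map ((TensorProduct.assoc R M A A).toLinearMap ∘ₗ ρ.rTensor A ∘ₗ ρ)
            ((TensorProduct.assoc R N A A).toLinearMap ∘ₗ σ.rTensor A ∘ₗ σ) := by
      rw [assoc_comp_rTensor_tensorTensorMul_comp_tensorTensorMul, LinearMap.comp_assoc,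
        ← map_comp, ← map_comp]
    _ = comul.lTensor (M ⊗[R] N) ∘ₗ tensorTensorMul R A M N ∘ₗ map ρ σ := by
      rw [hρ.coassoc, hσ.coassoc, ← LinearMap.comp_assoc, ← Bialgebra.toLinearMap_comulAlgHom,
        lTensor_comp_tensorTensorMul, LinearMap.comp_assoc, ← map_comp]

end TensorCoaction

namespace HopfAlgebra

variable {R A : Type*} [CommSemiring R] [Semiring A] [HopfAlgebra R A]

lemma sum_antipode_tmul_mul_comul (z : A) {b : A} {ι : Type*} (r : Repr R b ι) :
    ∑ k ∈ r.index, (antipode R (r.left k) ⊗ₜ[R] z) * comul (r.right k) = 1 ⊗ₜ (z * b) := by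
  let Ψ : A ⊗[R] (A ⊗[R] A) →ₗ[R] A ⊗[R] A :=
    map (LinearMap.mul' R A ∘ₗ (antipode R).rTensor A) (LinearMap.mulLeft R z) ∘ₗ
      (TensorProduct.assoc R A A A).symm.toLinearMap
  have hΨ : ∀ x y w, Ψ (x ⊗ₜ (y ⊗ₜ w)) = (antipode R x * y) ⊗ₜ (z * w) := fun _ _ _ ↦ rfl
  have hcoassoc :=
    congr(Ψ $(sum_tmul_tmul_eq r (fun k ↦ ℛ R (r.left k)) (fun k ↦ ℛ R (r.right k))))
  simp only [map_sum, hΨ, ← sum_tmul, sum_antipode_mul_eq_algebraMap_counit] at hcoassoc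
  calc ∑ k ∈ r.index, (antipode R (r.left k) ⊗ₜ[R] z) * comul (r.right k)
      = ∑ k ∈ r.index, algebraMap R A (counit (r.left k)) ⊗ₜ[R] (z * r.right k) := by
        rw [hcoassoc]
        simp only [← (ℛ R _).eq, Finset.mul_sum, Algebra.TensorProduct.tmul_mul_tmul]
    _ = 1 ⊗ₜ (z * b) := by
        simp only [Algebra.algebraMap_eq_smul_one, smul_tmul, ← mul_smul_comm, ← tmul_sum,
          ← Finset.mul_sum, sum_counit_smul]

lemma comul_left_inv :
    toConv (map (antipode R) (antipode R) ∘ₗ (TensorProduct.comm R A A).toLinearMap ∘ₗ comul) *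
      toConv (comul (R := R) (A := A)) = 1 := by
  ext a
  let r := ℛ R a
  let Φ : A ⊗[R] (A ⊗[R] A) →ₗ[R] A ⊗[R] A :=
    LinearMap.mul' R (A ⊗[R] A) ∘ₗ
      map ((TensorProduct.comm R A A).toLinearMap ∘ₗ map (antipode R) (antipode R)) comul ∘ₗ
      (TensorProduct.assoc R A A A).symm.toLinearMap
  have hΦ : ∀ x y w, Φ (x ⊗ₜ (y ⊗ₜ w)) = (antipode R y ⊗ₜ antipode R x) * comul w :=
    fun _ _ _ ↦ rfl
  have hcoassoc :=
    congr(Φ $(sum_tmul_tmul_eq r (fun k ↦ ℛ R (r.left k)) (fun k ↦ ℛ R (r.right k))))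
  simp only [map_sum, hΦ, sum_antipode_tmul_mul_comul] at hcoassoc
  calc _ = ∑ i ∈ r.index, (1 : A) ⊗ₜ[R] (antipode R (r.left i) * r.right i) := by
        rw [r.convMul_apply, ← hcoassoc]
        simp only [LinearMap.comp_apply, ← (ℛ R _).eq, map_sum, Finset.sum_mul]
        rfl
    _ = _ := by
        rw [← tmul_sum, sum_antipode_mul_eq_algebraMap_counit, LinearMap.convOne_apply,
          Algebra.TensorProduct.algebraMap_apply']

lemma comul_comp_antipode :
    comul ∘ₗ antipode R =
      map (antipode R) (antipode R) ∘ₗ (TensorProduct.comm R A A).toLinearMap ∘ₗ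
        comul (R := R) (A := A) :=
  congr(ofConv $(left_inv_eq_right_inv comul_left_inv LinearMap.comul_right_inv)).symm

lemma comul_antipode (a : A) :
    comul (antipode R a) = map (antipode R) (antipode R) (TensorProduct.comm R A A (comul a)) :=
  LinearMap.congr_fun comul_comp_antipode a

end HopfAlgebra

section AntipodeCoaction

variable {R A : Type*} [CommSemiring R] [Semiring A] [HopfAlgebra R A]

def antipodeCoaction : A →ₗ[R] A ⊗[R] A :=
  (TensorProduct.comm R A A).toLinearMap ∘ₗ (antipode R).rTensor A ∘ₗ comul

lemma isRightCoaction_antipodeCoaction : IsRightCoaction (antipodeCoaction (R := R) (A := A)) where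
  lTensor_counit_comp := by
    ext a
    have hcounit := congr(TensorProduct.comm R R A $(sum_counit_tmul_eq (ℛ R a)))
    simp only [map_sum, TensorProduct.comm_tmul] at hcounit
    simpa [antipodeCoaction, ← (ℛ R a).eq] using hcounit
  coassoc := by
    ext a
    let r := ℛ R a
    let Λ : A ⊗[R] (A ⊗[R] A) →ₗ[R] A ⊗[R] (A ⊗[R] A) :=
      map LinearMap.id ((TensorProduct.comm R A A).toLinearMap ∘ₗ map (antipode R) (antipode R)) ∘ₗ
        (TensorProduct.comm R (A ⊗[R] A) A).toLinearMap ∘ₗ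
        (TensorProduct.assoc R A A A).symm.toLinearMap
    have hΛ : ∀ x y w, Λ (x ⊗ₜ (y ⊗ₜ w)) = w ⊗ₜ (antipode R y ⊗ₜ antipode R x) :=
      fun _ _ _ ↦ rfl
    have hcoassoc :=
      congr(Λ $(sum_tmul_tmul_eq r (fun k ↦ ℛ R (r.left k)) (fun k ↦ ℛ R (r.right k))))
    simp only [map_sum, hΛ] at hcoassoc
    simp only [antipodeCoaction, LinearMap.comp_apply, ← r.eq, map_sum, LinearMap.rTensor_tmul,
      LinearMap.lTensor_tmul, LinearEquiv.coe_coe, TensorProduct.comm_tmul, comul_antipode]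
    simp only [← (ℛ R _).eq, map_sum, sum_tmul, tmul_sum, LinearMap.rTensor_tmul, map_tmul,
      TensorProduct.comm_tmul, TensorProduct.assoc_tmul]
    exact hcoassoc.symm

end AntipodeCoaction

section Plaquette

variable (R A : Type*) [CommSemiring R] [Semiring A] [HopfAlgebra R A]

def plaquetteCoaction :
    A ⊗[R] (A ⊗[R] (A ⊗[R] A)) →ₗ[R] (A ⊗[R] (A ⊗[R] (A ⊗[R] A))) ⊗[R] A :=
  tensorCoaction comul (tensorCoaction antipodeCoaction (tensorCoaction antipodeCoaction comul))

lemma isRightCoaction_plaquetteCoaction : IsRightCoaction (plaquetteCoaction R A) :=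
  isRightCoaction_comul.tensor <| isRightCoaction_antipodeCoaction.tensor <|
    isRightCoaction_antipodeCoaction.tensor isRightCoaction_comul

end Plaquette

lemma plaquetteRep_eq_dualAct (f : Module.Dual ℂ A) :
    plaquetteRep A f = dualAct (plaquetteCoaction ℂ A) f := by
  let τS : A ⊗[ℂ] A →ₗ[ℂ] A ⊗[ℂ] A :=
    (TensorProduct.comm ℂ A A).toLinearMap ∘ₗ (antipode ℂ).rTensor A
  have hfactor : plaquetteCoaction ℂ A =
      (tensorTensorMul ℂ A A _ ∘ₗ map LinearMap.id (tensorTensorMul ℂ A A _ ∘ₗ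
        map τS (tensorTensorMul ℂ A A A ∘ₗ map τS LinearMap.id))) ∘ₗ comulEach A := by
    simp only [plaquetteCoaction, tensorCoaction, antipodeCoaction, comulEach, τS,
      LinearMap.comp_assoc, ← map_comp, LinearMap.id_comp]
  rw [dualAct, hfactor]
  simp only [plaquetteRep, ← LinearMap.comp_assoc]
  congr 1
  ext x₁ x₂ y₁ y₂ z₁ z₂ v₁ v₂
  simp [τS, preSwap, unzip, scalarPart, mulFour, tensorTensorTensorComm_tmul]

theorem plaquetteRep_one_and_mul :
    plaquetteRep A Coalgebra.counit = LinearMap.id ∧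
    ∀ f f' : Module.Dual ℂ A,
      plaquetteRep A (conv f f') = plaquetteRep A f ∘ₗ plaquetteRep A f' := by
  have hρ := isRightCoaction_plaquetteCoaction ℂ A
  simp only [plaquetteRep_eq_dualAct]
  exact ⟨hρ.dualAct_counit, fun f f' ↦ hρ.dualAct_convMul f f'⟩
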